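/- Under the standing hypotheses, if M_i ≠ 0 for some i ∈ P, then there exists w ≤ i such that D_w is a proper submodule of M_w; equivalently, M possesses an indecomposable homogeneous element of some degree w ≤ i. -/

import Mathlib

open scoped DirectSum

variable (P : Type) [AddCommGroup P] [Lattice P]
  [CovariantClass P P (· + ·) (· ≤ ·)] [DecidableEq P]
variable (R : Type) [CommRing R]

/-- The monoid algebra `R[U₀]` on the submonoid `U₀` of nonnegative elements of `P`. -/
abbrev PersAlg : Type := AddMonoidAlgebra R ↥(AddSubmonoid.nonneg P)

/-- The monomial `t^p ∈ R[U₀]` for `p ≥ 0` (and `0` otherwise, a junk value). -/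
noncomputable def tp (p : P) : PersAlg P R :=
  letI := Classical.dec (0 ≤ p)
  if h : 0 ≤ p then AddMonoidAlgebra.single (⟨p, h⟩ : ↥(AddSubmonoid.nonneg P)) 1 else 0

/-- A `P`-graded `R[U₀]`-module (persistence module): an `R[U₀]`-module together with an
internal direct sum decomposition `M = ⊕_{a ∈ P} M_a` into `R`-submodules such that
`t^s • M_a ⊆ M_{a+s}` for all `s ≥ 0`. -/
structure PersMod : Type 1 where
  carrier : Type
  [isAddCommGroup : AddCommGroup carrier]
  [isModuleR : Module R carrier]
  [isModule : Module (PersAlg P R) carrier]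
  [isTower : IsScalarTower R (PersAlg P R) carrier]
  deg : P → Submodule R carrier
  isInternal : DirectSum.IsInternal deg
  tp_smul_mem : ∀ (s : P), 0 ≤ s → ∀ (a : P) (x : carrier),
    x ∈ deg a → tp P R s • x ∈ deg (a + s)

attribute [instance] PersMod.isAddCommGroup PersMod.isModuleR PersMod.isModule PersMod.isTower

/-- Scalar multiplication by a fixed element of `R[U₀]`, as an `R`-linear map. -/
noncomputable def smulMapR (M : PersMod P R) (a : PersAlg P R) : M.carrier →ₗ[R] M.carrier :=
  (LinearMap.lsmul (PersAlg P R) M.carrier a).restrictScalars R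

/-- `D_r ⊆ M_r`, the sum of the images of all `M_q`, `q < r`, under `t^{r-q}`. -/
noncomputable def Dsub (M : PersMod P R) (r : P) : Submodule R M.carrier :=
  ⨆ q : {q : P // q < r}, Submodule.map (smulMapR P R M (tp P R (r - q.1))) (M.deg q.1)

/-- `M` is graded free: it admits an `R[U₀]`-basis of homogeneous elements. -/
def IsGradedFree (M : PersMod P R) : Prop :=
  ∃ (Λ : Type) (d : Λ → P) (b : Module.Basis Λ (PersAlg P R) M.carrier),
    ∀ η, b η ∈ M.deg (d η)

/-- `M` is graded projective: it is a graded direct summand of a graded free module. -/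
def IsGradedProjective (M : PersMod P R) : Prop :=
  ∃ F : PersMod P R, IsGradedFree P R F ∧
    ∃ (ι : M.carrier →ₗ[PersAlg P R] F.carrier) (π : F.carrier →ₗ[PersAlg P R] M.carrier),
      (∀ (a : P), ∀ x ∈ M.deg a, ι x ∈ F.deg a) ∧
      (∀ (a : P), ∀ x ∈ F.deg a, π x ∈ M.deg a) ∧
      π.comp ι = LinearMap.id

/-- An `R[U₀]`-submodule `S` of a graded module `F` is graded if it is the sum of its
homogeneous parts `S ∩ F_a`. -/
def IsGradedSubmodule (F : PersMod P R) (S : Submodule (PersAlg P R) F.carrier) : Prop :=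
  S.restrictScalars R = ⨆ a : P, (S.restrictScalars R ⊓ F.deg a)

/-- For a graded submodule `S ⊆ F`, the submodule `D_r` of sums of images of the homogeneous
pieces `S ∩ F_q`, `q < r`, under `t^{r-q}`. -/
noncomputable def DsubOf (F : PersMod P R) (S : Submodule (PersAlg P R) F.carrier) (r : P) :
    Submodule R F.carrier :=
  ⨆ q : {q : P // q < r},
    Submodule.map (smulMapR P R F (tp P R (r - q.1))) (S.restrictScalars R ⊓ F.deg q.1)

/-!
Suppose `D_w = M_w` for all `w ≤ i`, and realise `M` as a graded summand `π ∘ ι = id` of a graded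
free module `F` with homogeneous basis `b_η` of degrees `d_η`. An element of `D_{d_η}` is built
from elements of strictly smaller degree, so its image in `F` has zero `b_η`-coordinate; hence
`ι(M_{d_η})` has zero `b_η`-coordinate whenever `d_η ≤ i`. For `0 ≠ x ∈ M_i`, take `b_η₀` of
maximal degree in the support of `ι x`. Expanding `ι x = ι π (ι x) = ∑ c_η ι π (b_η)`, the
`b_η₀`-coordinate of each term vanishes: `ι π (b_η)` has degree `d_η`, which is either not above
`d_η₀` or equal to it by maximality. So `c_η₀ = 0`, a contradiction.
-/

set_option linter.unusedSectionVars false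

theorem iSupIndep.le_of_le_of_iSup_eq_top {α ι : Type*} [CompleteLattice α] [IsModularLattice α]
    {A B : ι → α} (hA : iSupIndep A) (hBA : ∀ j, B j ≤ A j) (hB : ⨆ j, B j = ⊤) (i : ι) :
    A i ≤ B i :=
  calc A i = A i ⊓ (B i ⊔ ⨆ (j) (_ : j ≠ i), B j) := by rw [← iSup_split_single, hB, inf_top_eq]
    _ = B i ⊔ A i ⊓ ⨆ (j) (_ : j ≠ i), B j := by rw [inf_comm, sup_inf_assoc_of_le _ (hBA i),
        inf_comm]
    _ ≤ B i ⊔ A i ⊓ ⨆ (j) (_ : j ≠ i), A j := by gcongr with j; exact hBA j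
    _ = B i := by rw [(hA i).eq_bot, sup_bot_eq]

theorem Module.Basis.repr_eq_zero_of_mem_of_ne {R N κ ι : Type*} [Ring R] [AddCommGroup N]
    [Module R N] {A : ι → Submodule R N} (hA : iSupIndep A) (B : Module.Basis κ R N)
    {e : κ → ι} (hB : ∀ k, B k ∈ A (e k)) {a : ι} {f : N} (hf : f ∈ A a) {k : κ}
    (hk : e k ≠ a) : B.repr f k = 0 := by
  let G : ι → Submodule R N := fun a => Submodule.span R (B '' (e ⁻¹' {a}))
  have hGA : ∀ a, G a ≤ A a := fun a =>
    Submodule.span_le.mpr <| Set.image_subset_iff.mpr fun k hk => hk ▸ hB k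
  have hG : ⨆ a, G a = ⊤ := by
    refine eq_top_iff.mpr (B.span_eq ▸ Submodule.span_le.mpr ?_)
    rintro _ ⟨k, rfl⟩
    exact Submodule.mem_iSup_of_mem (e k) (Submodule.subset_span ⟨k, rfl, rfl⟩)
  have hfG : ↑(B.repr f).support ⊆ e ⁻¹' {a} :=
    B.mem_span_image.mp (hA.le_of_le_of_iSup_eq_top hGA hG a hf)
  by_contra h
  exact hk (hfG (Finsupp.mem_support_iff.mpr h))

variable {P R}

theorem tp_coe (u : AddSubmonoid.nonneg P) : tp P R u = AddMonoidAlgebra.single u 1 :=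
  dif_pos u.2

theorem tp_sub_smul_mem (M : PersMod P R) {q w : P} (hqw : q ≤ w) {x : M.carrier}
    (hx : x ∈ M.deg q) : tp P R (w - q) • x ∈ M.deg w := by
  simpa using M.tp_smul_mem (w - q) (sub_nonneg.mpr hqw) q x hx

theorem Dsub_le_deg (M : PersMod P R) (w : P) : Dsub P R M w ≤ M.deg w :=
  iSup_le fun q => Submodule.map_le_iff_le_comap.mpr fun _ hx => tp_sub_smul_mem M q.2.le hx

section GradedBasis

variable {F : PersMod P R} {Λ : Type} {d : Λ → P} {b : Module.Basis Λ (PersAlg P R) F.carrier}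

theorem repr_eq_zero_of_not_le (hb : ∀ η, b η ∈ F.deg (d η)) {a : P} {f : F.carrier}
    (hf : f ∈ F.deg a) {η : Λ} (h : ¬ d η ≤ a) : b.repr f η = 0 := by
  let B := (AddMonoidAlgebra.basis (AddSubmonoid.nonneg P) R).smulTower b
  have hB : ∀ k, B k ∈ F.deg (d k.2 + k.1) := fun ⟨u, η⟩ => by
    simpa [B, ← tp_coe] using F.tp_smul_mem u u.2 (d η) (b η) (hb η)
  ext u
  have := B.repr_eq_zero_of_mem_of_ne F.isInternal.submodule_iSupIndep hB hf (k := (u, η))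
    fun hu => h (hu ▸ le_add_of_nonneg_right u.2)
  rwa [Module.Basis.smulTower_repr_mk] at this

theorem repr_map_eq_zero_of_mem_Dsub (hb : ∀ η, b η ∈ F.deg (d η)) {M : PersMod P R}
    {ι : M.carrier →ₗ[PersAlg P R] F.carrier} (hι : ∀ a, ∀ x ∈ M.deg a, ι x ∈ F.deg a)
    {η : Λ} {y : M.carrier} (hy : y ∈ Dsub P R M (d η)) : b.repr (ι y) η = 0 := by
  let φ := Finsupp.lapply η ∘ₗ b.repr.toLinearMap ∘ₗ ι
  suffices Dsub P R M (d η) ≤ (LinearMap.ker φ).restrictScalars R from this hy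
  refine iSup_le fun q => Submodule.map_le_iff_le_comap.mpr fun m hm => ?_
  have hφm : φ m = 0 := repr_eq_zero_of_not_le hb (hι q m hm) fun h => (h.trans_lt q.2).false
  simp [smulMapR, hφm]

theorem deg_eq_bot_of_repr_eq_zero (hb : ∀ η, b η ∈ F.deg (d η)) {M : PersMod P R}
    {ι : M.carrier →ₗ[PersAlg P R] F.carrier} {π : F.carrier →ₗ[PersAlg P R] M.carrier}
    (hι : ∀ a, ∀ x ∈ M.deg a, ι x ∈ F.deg a) (hπ : ∀ a, ∀ x ∈ F.deg a, π x ∈ M.deg a)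
    (hπι : π ∘ₗ ι = LinearMap.id) {i : P}
    (h : ∀ η, d η ≤ i → ∀ y ∈ M.deg (d η), b.repr (ι y) η = 0) : M.deg i = ⊥ := by
  refine eq_bot_iff.mpr fun x hx => ?_
  have hπιx : π (ι x) = x := LinearMap.congr_fun hπι x
  set c := b.repr (ι x)
  suffices c = 0 by
    rw [Submodule.mem_bot, ← hπιx, show ι x = 0 by simpa [c] using this, map_zero]
  by_contra hc
  obtain ⟨η₀, hη₀, hmax⟩ := c.support.exists_maximalFor d (Finsupp.support_nonempty_iff.mpr hc)
  have hdη₀ : d η₀ ≤ i := by_contra fun h' => Finsupp.mem_support_iff.mp hη₀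
    (repr_eq_zero_of_not_le hb (hι i x hx) h')
  have hterm : ∀ η ∈ c.support, b.repr (ι (π (b η))) η₀ = 0 := fun η hη => by
    by_cases hle : d η₀ ≤ d η
    · have hdη : d η = d η₀ := le_antisymm (hmax hη hle) hle
      exact h η₀ hdη₀ _ (hdη ▸ hπ _ _ (hb η))
    · exact repr_eq_zero_of_not_le hb (hι _ _ (hπ _ _ (hb η))) hle
  have hexp : c η₀ = ∑ η ∈ c.support, c η • b.repr (ι (π (b η))) η₀ :=
    calc c η₀ = b.repr (ι (π (ι x))) η₀ := by rw [hπιx]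
      _ = b.repr (ι (π (c.sum fun η r => r • b η))) η₀ := by
        rw [← Finsupp.linearCombination_apply, b.linearCombination_repr]
      _ = _ := by simp [Finsupp.sum, Finsupp.finsetSum_apply]
  exact Finsupp.mem_support_iff.mp hη₀
    (hexp.trans (Finset.sum_eq_zero fun η hη => by rw [hterm η hη, smul_zero]))

end GradedBasis

theorem exists_indecomposable_general
    (M : PersMod P R) (hproj : IsGradedProjective P R M)
    (i : P) (hi : M.deg i ≠ ⊥) :
    ∃ w ≤ i, Dsub P R M w < M.deg w := by
  obtain ⟨F, ⟨Λ, d, b, hb⟩, ι, π, hι, hπ, hπι⟩ := hproj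
  by_contra! hdec
  refine hi (deg_eq_bot_of_repr_eq_zero hb hι hπ hπι fun η hη y hy => ?_)
  have hD : Dsub P R M (d η) = M.deg (d η) := eq_of_le_of_not_lt (Dsub_le_deg M _) (hdec _ hη)
  exact repr_map_eq_zero_of_mem_Dsub hb hι (hD ▸ hy)

theorem exists_indecomposable [IsDomain R] [IsPrincipalIdealRing R]
    (M : PersMod P R) (hproj : IsGradedProjective P R M) (hFG : ∀ a : P, (M.deg a).FG)
    (i : P) (hi : M.deg i ≠ ⊥) :
    ∃ w ≤ i, Dsub P R M w < M.deg w :=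
  exists_indecomposable_general M hproj i hi
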